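/- arXiv:math/0004095 — 2 statements merged into one kernel-verified Lean document; each statement's English description precedes it below -/
import Mathlib

section
/- Let L be a strongly symmetric ample line bundle of type (1,2,4) on an abelian 3-fold A, with symmetric theta structure, K(L) ≅ ℤ/2 ⊕ ℤ/4 ⊕ ℤ/2 ⊕ ℤ/4 generated by σ₁,τ₁,σ₂,τ₂ with e^L(σ₁,σ₂) = −1, e^L(τ₁,τ₂) = −i, e^L(σ_i,τ_j) = 1; let G' = ⟨σ'₁,(τ'₁)²,(τ'₂)²⟩ ⊂ G(L) be a lift of the maximal isotropic subgroup G = ⟨σ₁,τ₁²,τ₂²⟩, with lifts chosen so o(σ'_i)=2, o(τ'_i)=4 and δ_{−1}(τ'_i) = (τ'_i)^{−1}, and let s₀ be a G'-invariant section with i(s₀) = s₀. Then: (a) i σ'₂(s₀) = σ'₂(s₀); (b) i τ'_j(s₀) = τ'_j(s₀) for j = 1,2; (c) i σ'₂τ'_j(s₀) = σ'₂τ'_j(s₀); (d) i τ'₁τ'₂(s₀) = −τ'₁τ'₂(s₀); (e) i σ'₂τ'₁τ'₂(s₀) = −σ'₂τ'₁τ'₂(s₀). -/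
/-!
STATEMENT 6.
Let `L` be a strongly symmetric ample line bundle of type `(1,2,4)` on an
abelian 3-fold `A`, with a symmetric theta structure;
`K(L) ≅ ℤ/2 ⊕ ℤ/4 ⊕ ℤ/2 ⊕ ℤ/4` is generated by `σ₁, τ₁, σ₂, τ₂` with
`e^L(σ₁,σ₂) = -1`, `e^L(τ₁,τ₂) = -i`, `e^L(σᵢ,τⱼ) = 1`.  Let
`G' = ⟨σ'₁, (τ'₁)², (τ'₂)²⟩ ⊆ 𝒢(L)` be a lift of the maximal isotropic
subgroup `G = ⟨σ₁, τ₁², τ₂²⟩` with `o(σ'ᵢ) = 2`, `o(τ'ᵢ) = 4` and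
`δ₋₁(τ'ᵢ) = (τ'ᵢ)⁻¹`, and let `s₀` be a `G'`-invariant section with
`i(s₀) = s₀`.  Then:
(a) `i σ'₂(s₀) = σ'₂(s₀)`;
(b) `i τ'ⱼ(s₀) = τ'ⱼ(s₀)` for `j = 1,2`;
(c) `i σ'₂τ'ⱼ(s₀) = σ'₂τ'ⱼ(s₀)`;
(d) `i τ'₁τ'₂(s₀) = -τ'₁τ'₂(s₀)`;
(e) `i σ'₂τ'₁τ'₂(s₀) = -σ'₂τ'₁τ'₂(s₀)`.
-/

/-- Abstract model of the theta group `𝒢(L)` of a symmetric ample line bundle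
`L` on an abelian variety, as a central extension `1 → ℂ* → 𝒢(L) → K(L) → 0`
with the Weil form as commutator, together with its weight-one action on
`H⁰(L)`, the action of the inversion `i` (via the normalized isomorphism
`ψ : L ≅ i*L`, `ψ(0) = +1`) and the conjugation `δ₋₁ : z ↦ izi`. -/
structure SymmetricThetaActionSetup where
  /-- the points of the abelian variety `A` -/
  A : Type
  [grpA : AddCommGroup A]
  /-- the fixed group `K(L)` -/
  K : AddSubgroup A
  /-- the theta group `𝒢(L)` -/
  G : Type
  [grpG : Group G]
  /-- the central embedding `ℂ* → 𝒢(L)` -/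
  iota : ℂˣ →* G
  iota_injective : Function.Injective iota
  iota_central : ∀ (c : ℂˣ) (x : G), iota c * x = x * iota c
  /-- the projection `𝒢(L) → K(L)` -/
  proj : G → A
  proj_one : proj 1 = 0
  proj_mul : ∀ x y, proj (x * y) = proj x + proj y
  proj_mem : ∀ x, proj x ∈ K
  proj_surjOn : ∀ a ∈ K, ∃ x, proj x = a
  proj_ker : ∀ x, proj x = 0 ↔ ∃ c, x = iota c
  /-- the Weil form `e^L`, as the commutator form of `𝒢(L)` -/
  weil : A → A → ℂˣ
  weil_comm : ∀ x y : G, x * y = iota (weil (proj x) (proj y)) * (y * x)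
  /-- `δ₋₁ : 𝒢(L) → 𝒢(L)`, `z ↦ izi` -/
  deltaNeg : G → G
  deltaNeg_mul : ∀ x y, deltaNeg (x * y) = deltaNeg x * deltaNeg y
  deltaNeg_invol : ∀ x, deltaNeg (deltaNeg x) = x
  deltaNeg_iota : ∀ c, deltaNeg (iota c) = iota c
  deltaNeg_proj : ∀ x, proj (deltaNeg x) = - proj x
  /-- the form `e^L_* : A₂ → {±1}` of the symmetric bundle `L` -/
  estar : A → ℂˣ
  estar_sq : ∀ a, estar a * estar a = 1
  estar_zero : estar 0 = 1
  /-- Mumford's lemma: `δ₋₁(z) = e^L_*(z)·z` for `z` of order `2`, `z ≠ ±1` -/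
  mumford : ∀ z : G, z * z = 1 → proj z ≠ 0 → deltaNeg z = iota (estar (proj z)) * z
  /-- the space of sections `H⁰(A,L)` -/
  H0 : Type
  [grpH0 : AddCommGroup H0]
  [modH0 : Module ℂ H0]
  [fdH0 : FiniteDimensional ℂ H0]
  /-- the weight-one action of `𝒢(L)` on `H⁰(L)` -/
  act : G →* (H0 ≃ₗ[ℂ] H0)
  act_iota : ∀ (c : ℂˣ) (v : H0), act (iota c) v = (c : ℂ) • v
  /-- the action of the inversion `i` on `H⁰(L)` -/
  inv : H0 ≃ₗ[ℂ] H0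
  inv_invol : ∀ v, inv (inv v) = v
  /-- compatibility: `i ∘ z ∘ i = δ₋₁(z)` on `H⁰(L)` -/
  inv_act : ∀ (z : G) (v : H0), inv (act z (inv v)) = act (deltaNeg z) v

attribute [instance] SymmetricThetaActionSetup.grpA SymmetricThetaActionSetup.grpG
  SymmetricThetaActionSetup.grpH0 SymmetricThetaActionSetup.modH0
  SymmetricThetaActionSetup.fdH0

/-!
Since `i(s₀) = s₀`, we have `i z(s₀) = δ₋₁(z)(s₀)`, so each claim compares `δ₋₁(z)(s₀)` with
`z(s₀)`. As `τ'ⱼ²` fixes `s₀`, `(τ'ⱼ)⁻¹` acts on `s₀` like `τ'ⱼ`; with `δ₋₁(σ'₂) = σ'₂`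
this gives (a)–(c). For `τ'₁τ'₂`, `δ₋₁` yields `(τ'₁)⁻¹(τ'₂)⁻¹`; on `s₀` this becomes
`τ'₁τ'₂` after two commutations, each costing `e^L(τ₁,τ₂)⁻¹ = i`, hence the sign `i² = -1` in (d) and (e).
-/

namespace SymmetricThetaActionSetup

variable (T : SymmetricThetaActionSetup)

theorem act_mul_apply (x y : T.G) (v : T.H0) : T.act (x * y) v = T.act x (T.act y v) := by
  rw [map_mul, LinearEquiv.mul_apply]

theorem act_iota_mul_apply (c : ℂˣ) (x : T.G) (v : T.H0) :
    T.act (T.iota c * x) v = (c : ℂ) • T.act x v := by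
  rw [act_mul_apply, T.act_iota]

theorem act_inv_apply_eq_of_act_mul_self {x : T.G} {v : T.H0} (hx : T.act (x * x) v = v) :
    T.act x⁻¹ v = T.act x v := by
  conv_lhs => rw [← hx, ← act_mul_apply, inv_mul_cancel_left]

theorem mul_comm_eq_iota_inv_mul (x y : T.G) :
    y * x = T.iota (T.weil (T.proj x) (T.proj y))⁻¹ * (x * y) := by
  rw [T.weil_comm x y, ← mul_assoc, ← map_mul, inv_mul_cancel, map_one, one_mul]

theorem inv_mul_eq_iota_inv_mul (x y : T.G) :
    x⁻¹ * y = T.iota (T.weil (T.proj x) (T.proj y))⁻¹ * (y * x⁻¹) := by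
  have h : y * x⁻¹ = T.iota (T.weil (T.proj x) (T.proj y)) * (x⁻¹ * y) := by
    calc y * x⁻¹ = x⁻¹ * (x * y) * x⁻¹ := by group
      _ = x⁻¹ * (T.iota (T.weil (T.proj x) (T.proj y)) * (y * x)) * x⁻¹ := by
        rw [← T.weil_comm]
      _ = T.iota (T.weil (T.proj x) (T.proj y)) * (x⁻¹ * y) := by
        rw [← mul_assoc x⁻¹, ← T.iota_central]
        group
  rw [h, ← mul_assoc, ← map_mul, inv_mul_cancel, map_one, one_mul]

theorem act_inv_mul_inv_apply {x y : T.G} {v : T.H0} (hx : T.act (x * x) v = v)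
    (hy : T.act (y * y) v = v) :
    T.act (x⁻¹ * y⁻¹) v = ((T.weil (T.proj x) (T.proj y) : ℂ) ^ 2)⁻¹ • T.act (x * y) v := by
  rw [act_mul_apply, act_inv_apply_eq_of_act_mul_self T hy, ← act_mul_apply,
    inv_mul_eq_iota_inv_mul, act_iota_mul_apply, act_mul_apply,
    act_inv_apply_eq_of_act_mul_self T hx, ← act_mul_apply, mul_comm_eq_iota_inv_mul,
    act_iota_mul_apply, smul_smul, Units.val_inv_eq_inv_val, ← mul_inv, sq]

theorem inv_act_apply_of_inv_eq {v : T.H0} (hv : T.inv v = v) (z : T.G) :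
    T.inv (T.act z v) = T.act (T.deltaNeg z) v := by
  rw [← T.inv_act z v, hv]

end SymmetricThetaActionSetup

open SymmetricThetaActionSetup

theorem statement6_general (T : SymmetricThetaActionSetup)
    -- lifts `σ'₁, σ'₂, τ'₁, τ'₂ ∈ 𝒢(L)` of generators `σ₁, σ₂, τ₁, τ₂` of
    -- `K(L) ≅ ℤ/2 ⊕ ℤ/4 ⊕ ℤ/2 ⊕ ℤ/4`, with `o(σ'ᵢ) = 2`, `o(τ'ᵢ) = 4`
    (σ₁' σ₂' τ₁' τ₂' : T.G)
    -- values of the Weil form: `e^L(σ₁,σ₂) = -1`, `e^L(τ₁,τ₂) = -i`,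
    -- `e^L(σᵢ,τⱼ) = 1`
    (hw₂ : (T.weil (T.proj τ₁') (T.proj τ₂') : ℂ) = -Complex.I)
    -- normalization of the lifts: `δ₋₁(σ'ⱼ) = σ'ⱼ` and `δ₋₁(τ'ⱼ) = (τ'ⱼ)⁻¹`
    (hδσ₂ : T.deltaNeg σ₂' = σ₂')
    (hδτ₁ : T.deltaNeg τ₁' = τ₁'⁻¹) (hδτ₂ : T.deltaNeg τ₂' = τ₂'⁻¹)
    -- `s₀` is a `G'`-invariant section, `G' = ⟨σ'₁, (τ'₁)², (τ'₂)²⟩`,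
    -- with `i(s₀) = s₀`
    (s₀ : T.H0)
    (hG' : ∀ z ∈ Subgroup.closure ({σ₁', τ₁' * τ₁', τ₂' * τ₂'} : Set T.G),
      T.act z s₀ = s₀)
    (hinvs₀ : T.inv s₀ = s₀)
    :
    -- (a)
    T.inv (T.act σ₂' s₀) = T.act σ₂' s₀ ∧
    -- (b)
    T.inv (T.act τ₁' s₀) = T.act τ₁' s₀ ∧
    T.inv (T.act τ₂' s₀) = T.act τ₂' s₀ ∧
    -- (c)
    T.inv (T.act (σ₂' * τ₁') s₀) = T.act (σ₂' * τ₁') s₀ ∧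
    T.inv (T.act (σ₂' * τ₂') s₀) = T.act (σ₂' * τ₂') s₀ ∧
    -- (d)
    T.inv (T.act (τ₁' * τ₂') s₀) = - T.act (τ₁' * τ₂') s₀ ∧
    -- (e)
    T.inv (T.act (σ₂' * τ₁' * τ₂') s₀) = - T.act (σ₂' * τ₁' * τ₂') s₀ := by
  have hinv := inv_act_apply_of_inv_eq T hinvs₀
  have hfix₁ : T.act (τ₁' * τ₁') s₀ = s₀ := hG' _ (Subgroup.subset_closure (by simp))
  have hfix₂ : T.act (τ₂' * τ₂') s₀ = s₀ := hG' _ (Subgroup.subset_closure (by simp))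
  have hτ₁ := act_inv_apply_eq_of_act_mul_self T hfix₁
  have hτ₂ := act_inv_apply_eq_of_act_mul_self T hfix₂
  have hd : T.act (τ₁'⁻¹ * τ₂'⁻¹) s₀ = - T.act (τ₁' * τ₂') s₀ := by
    rw [act_inv_mul_inv_apply T hfix₁ hfix₂, hw₂, neg_sq, Complex.I_sq, inv_neg, inv_one,
      neg_one_smul]
  refine ⟨?_, ?_, ?_, ?_, ?_, ?_, ?_⟩
  · rw [hinv, hδσ₂]
  · rw [hinv, hδτ₁, hτ₁]
  · rw [hinv, hδτ₂, hτ₂]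
  · rw [hinv, T.deltaNeg_mul, hδσ₂, hδτ₁, act_mul_apply, hτ₁, ← act_mul_apply]
  · rw [hinv, T.deltaNeg_mul, hδσ₂, hδτ₂, act_mul_apply, hτ₂, ← act_mul_apply]
  · rw [hinv, T.deltaNeg_mul, hδτ₁, hδτ₂, hd]
  · rw [hinv, T.deltaNeg_mul, T.deltaNeg_mul, hδσ₂, hδτ₁, hδτ₂, mul_assoc, act_mul_apply, hd,
      map_neg, ← act_mul_apply, ← mul_assoc]

theorem statement6 (T : SymmetricThetaActionSetup)
    -- `h⁰(L) = 1·2·4 = 8` (type `(1,2,4)` on an abelian 3-fold)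
    (h0 : Module.finrank ℂ T.H0 = 8)
    -- `K(L) ≅ ℤ/2 ⊕ ℤ/4 ⊕ ℤ/2 ⊕ ℤ/4`
    (hK : Nat.card T.K = 64)
    -- `L` is strongly symmetric
    (hstrong : ∀ g ∈ T.K, g + g = 0 → T.estar g = 1)
    -- lifts `σ'₁, σ'₂, τ'₁, τ'₂ ∈ 𝒢(L)` of generators `σ₁, σ₂, τ₁, τ₂` of
    -- `K(L) ≅ ℤ/2 ⊕ ℤ/4 ⊕ ℤ/2 ⊕ ℤ/4`, with `o(σ'ᵢ) = 2`, `o(τ'ᵢ) = 4`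
    (σ₁' σ₂' τ₁' τ₂' : T.G)
    (hσ₁ : σ₁' * σ₁' = 1) (hσ₂ : σ₂' * σ₂' = 1)
    (hσ₁0 : T.proj σ₁' ≠ 0) (hσ₂0 : T.proj σ₂' ≠ 0)
    (hτ₁ : τ₁' ^ 4 = 1) (hτ₂ : τ₂' ^ 4 = 1)
    (hτ₁o : τ₁' * τ₁' ≠ 1) (hτ₂o : τ₂' * τ₂' ≠ 1)
    (hτ₁sq0 : T.proj (τ₁' * τ₁') ≠ 0) (hτ₂sq0 : T.proj (τ₂' * τ₂') ≠ 0)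
    -- `K(L)` is generated by `σ₁, τ₁, σ₂, τ₂`
    (hgen : T.K = AddSubgroup.closure {T.proj σ₁', T.proj τ₁', T.proj σ₂', T.proj τ₂'})
    -- values of the Weil form: `e^L(σ₁,σ₂) = -1`, `e^L(τ₁,τ₂) = -i`,
    -- `e^L(σᵢ,τⱼ) = 1`
    (hw₁ : (T.weil (T.proj σ₁') (T.proj σ₂') : ℂ) = -1)
    (hw₂ : (T.weil (T.proj τ₁') (T.proj τ₂') : ℂ) = -Complex.I)
    (hw₃ : T.weil (T.proj σ₁') (T.proj τ₁') = 1)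
    (hw₄ : T.weil (T.proj σ₁') (T.proj τ₂') = 1)
    (hw₅ : T.weil (T.proj σ₂') (T.proj τ₁') = 1)
    (hw₆ : T.weil (T.proj σ₂') (T.proj τ₂') = 1)
    -- normalization of the lifts: `δ₋₁(σ'ⱼ) = σ'ⱼ` and `δ₋₁(τ'ⱼ) = (τ'ⱼ)⁻¹`
    (hδσ₁ : T.deltaNeg σ₁' = σ₁') (hδσ₂ : T.deltaNeg σ₂' = σ₂')
    (hδτ₁ : T.deltaNeg τ₁' = τ₁'⁻¹) (hδτ₂ : T.deltaNeg τ₂' = τ₂'⁻¹)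
    -- `s₀` is a `G'`-invariant section, `G' = ⟨σ'₁, (τ'₁)², (τ'₂)²⟩`,
    -- with `i(s₀) = s₀`
    (s₀ : T.H0) (hs₀ : s₀ ≠ 0)
    (hG' : ∀ z ∈ Subgroup.closure ({σ₁', τ₁' * τ₁', τ₂' * τ₂'} : Set T.G),
      T.act z s₀ = s₀)
    (hinvs₀ : T.inv s₀ = s₀)
    :
    -- (a)
    T.inv (T.act σ₂' s₀) = T.act σ₂' s₀ ∧
    -- (b)
    T.inv (T.act τ₁' s₀) = T.act τ₁' s₀ ∧
    T.inv (T.act τ₂' s₀) = T.act τ₂' s₀ ∧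
    -- (c)
    T.inv (T.act (σ₂' * τ₁') s₀) = T.act (σ₂' * τ₁') s₀ ∧
    T.inv (T.act (σ₂' * τ₂') s₀) = T.act (σ₂' * τ₂') s₀ ∧
    -- (d)
    T.inv (T.act (τ₁' * τ₂') s₀) = - T.act (τ₁' * τ₂') s₀ ∧
    -- (e)
    T.inv (T.act (σ₂' * τ₁' * τ₂') s₀) = - T.act (σ₂' * τ₁' * τ₂') s₀ :=
  statement6_general T σ₁' σ₂' τ₁' τ₂' hw₂ hδσ₂ hδτ₁ hδτ₂ s₀ hG' hinvs₀
end

section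
/- Let J be the group of projective transformations of ℙH⁰(L) = ℙ⁷ generated by the sign changes α_k : (s₀:...:s_k:...:s₇) ↦ (s₀:...:−s_k:...:s₇), k = 1,...,7 (so |J| = 2⁷, and J is the Galois group of the squaring map p : ℙH⁰(L) → ℙH⁰(M²)). Then the group G' × ⟨i⟩ is identified with a subgroup of J: each g ∈ G acts as a product α_iα_jα_kα_l of four sign changes (with α₀ := α₁α₂⋯α₇), and the inversion i acts as α₆α₇, i.e. i(s₀:...:s₇) = (s₀:...:s₅:−s₆:−s₇). -/
/-- The group `J` of sign changes of the eight homogeneous coordinates of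
`ℙH⁰(L) = ℙ⁷`, as projective transformations: sign vectors modulo the global
sign.  It has order `2⁷` and is the Galois group of the squaring map
`p : ℙH⁰(L) → ℙH⁰(M²)`. -/
def signChangeGroup : Type :=
  (Fin 8 → ℤˣ) ⧸ Subgroup.zpowers (fun _ => (-1 : ℤˣ))

noncomputable instance : Group signChangeGroup :=
  inferInstanceAs (Group ((Fin 8 → ℤˣ) ⧸ Subgroup.zpowers (fun _ => (-1 : ℤˣ))))


/-! ### Auxiliary sign-vector combinatorics -/

def sv1 : Fin 8 → ℤˣ := ![1,-1,1,1,-1,-1,1,-1]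
def sv2 : Fin 8 → ℤˣ := ![1,1,1,-1,1,-1,-1,-1]
def sv3 : Fin 8 → ℤˣ := ![1,1,-1,1,-1,1,-1,-1]
def svi : Fin 8 → ℤˣ := ![1,1,1,1,1,1,-1,-1]
def svnu : Fin 8 → ℤˣ := fun _ => -1

def svp (a b c : Bool) : Fin 8 → ℤˣ := (cond a sv1 1) * (cond b sv2 1) * (cond c sv3 1)

set_option maxRecDepth 20000 in
lemma sv_key_inj : ∀ a b c a' b' c' tb ub db : Bool,
    svp a' b' c' * (cond ub svi 1) = (svp a b c * (cond tb svi 1)) * (cond db svnu 1) →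
    a' = a ∧ b' = b ∧ c' = c ∧ ub = tb ∧ db = false := by decide

set_option maxRecDepth 20000 in
lemma sv_card4 : ∀ a b c : Bool, ¬(a = false ∧ b = false ∧ c = false) →
    (Finset.univ.filter fun k => svp a b c k = -1).card = 4 := by decide

lemma svi_spec : ∀ k, svi k = -1 ↔ (k = 6 ∨ k = 7) := by decide

lemma sv_heiadd : ∀ t u : ZMod 2, svi ^ (t + u).val = svi ^ t.val * svi ^ u.val := by decide

lemma sv_zmod_cases : ∀ t : ZMod 2, t = 0 ∨ t = 1 := by decide

lemma sv_mk_eq (X Y : Fin 8 → ℤˣ)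
    (h : (QuotientGroup.mk X : signChangeGroup) = QuotientGroup.mk Y) :
    Y = X ∨ Y = X * svnu := by
  rw [QuotientGroup.eq] at h
  rw [Subgroup.mem_zpowers_iff] at h
  obtain ⟨m, hm⟩ := h
  rcases Int.even_or_odd m with ⟨q, hq⟩ | ⟨q, hq⟩
  · left
    have hz : ((fun _ => (-1:ℤˣ)) : Fin 8 → ℤˣ) ^ m = 1 := by
      rw [hq, ← two_mul, zpow_mul]
      rw [show ((fun _ => (-1:ℤˣ)) : Fin 8 → ℤˣ) ^ (2:ℤ) = 1 from by decide, one_zpow]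
    rw [hz] at hm
    exact (inv_mul_eq_one.mp hm.symm).symm
  · right
    have hz : ((fun _ => (-1:ℤˣ)) : Fin 8 → ℤˣ) ^ m = svnu := by
      rw [hq, zpow_add, zpow_mul]
      rw [show ((fun _ => (-1:ℤˣ)) : Fin 8 → ℤˣ) ^ (2:ℤ) = 1 from by decide, one_zpow,
        one_mul, zpow_one]
      rfl
    rw [hz] at hm
    rw [hm]
    group

lemma sv_card : Nat.card signChangeGroup = 2 ^ 7 := by
  have h2 : Nat.card (Subgroup.zpowers ((fun _ => (-1:ℤˣ)) : Fin 8 → ℤˣ)) = 2 := by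
    rw [Nat.card_zpowers]; apply orderOf_eq_prime <;> decide
  have htot := Subgroup.card_eq_card_quotient_mul_card_subgroup
    (Subgroup.zpowers ((fun _ => (-1:ℤˣ)) : Fin 8 → ℤˣ))
  have hc : Nat.card (Fin 8 → ℤˣ) = 2 ^ 8 := by
    simp [Nat.card_pi, Nat.card_eq_fintype_card]
  rw [hc, h2] at htot
  show Nat.card ((Fin 8 → ℤˣ) ⧸ Subgroup.zpowers (fun _ => (-1 : ℤˣ))) = 2 ^ 7
  omega

set_option maxHeartbeats 2000000 in
theorem statement8 (T : SymmetricThetaActionSetup)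
    -- `h⁰(L) = 1·2·4 = 8` (type `(1,2,4)` on an abelian 3-fold)
    (h0 : Module.finrank ℂ T.H0 = 8)
    -- `K(L) ≅ ℤ/2 ⊕ ℤ/4 ⊕ ℤ/2 ⊕ ℤ/4`
    (hK : Nat.card T.K = 64)
    -- `L` is strongly symmetric
    (hstrong : ∀ g ∈ T.K, g + g = 0 → T.estar g = 1)
    -- lifts `σ'₁, σ'₂, τ'₁, τ'₂ ∈ 𝒢(L)` of generators `σ₁, σ₂, τ₁, τ₂` of
    -- `K(L) ≅ ℤ/2 ⊕ ℤ/4 ⊕ ℤ/2 ⊕ ℤ/4`, with `o(σ'ᵢ) = 2`, `o(τ'ᵢ) = 4`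
    (σ₁' σ₂' τ₁' τ₂' : T.G)
    (hσ₁ : σ₁' * σ₁' = 1) (hσ₂ : σ₂' * σ₂' = 1)
    (hσ₁0 : T.proj σ₁' ≠ 0) (hσ₂0 : T.proj σ₂' ≠ 0)
    (hτ₁ : τ₁' ^ 4 = 1) (hτ₂ : τ₂' ^ 4 = 1)
    (hτ₁o : τ₁' * τ₁' ≠ 1) (hτ₂o : τ₂' * τ₂' ≠ 1)
    (hτ₁sq0 : T.proj (τ₁' * τ₁') ≠ 0) (hτ₂sq0 : T.proj (τ₂' * τ₂') ≠ 0)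
    -- `K(L)` is generated by `σ₁, τ₁, σ₂, τ₂`
    (hgen : T.K = AddSubgroup.closure {T.proj σ₁', T.proj τ₁', T.proj σ₂', T.proj τ₂'})
    -- values of the Weil form: `e^L(σ₁,σ₂) = -1`, `e^L(τ₁,τ₂) = -i`,
    -- `e^L(σᵢ,τⱼ) = 1`
    (hw₁ : (T.weil (T.proj σ₁') (T.proj σ₂') : ℂ) = -1)
    (hw₂ : (T.weil (T.proj τ₁') (T.proj τ₂') : ℂ) = -Complex.I)
    (hw₃ : T.weil (T.proj σ₁') (T.proj τ₁') = 1)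
    (hw₄ : T.weil (T.proj σ₁') (T.proj τ₂') = 1)
    (hw₅ : T.weil (T.proj σ₂') (T.proj τ₁') = 1)
    (hw₆ : T.weil (T.proj σ₂') (T.proj τ₂') = 1)
    -- normalization of the lifts: `δ₋₁(σ'ⱼ) = σ'ⱼ` and `δ₋₁(τ'ⱼ) = (τ'ⱼ)⁻¹`
    (hδσ₁ : T.deltaNeg σ₁' = σ₁') (hδσ₂ : T.deltaNeg σ₂' = σ₂')
    (hδτ₁ : T.deltaNeg τ₁' = τ₁'⁻¹) (hδτ₂ : T.deltaNeg τ₂' = τ₂'⁻¹)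
    -- `s₀` is a `G'`-invariant section, `G' = ⟨σ'₁, (τ'₁)², (τ'₂)²⟩`,
    -- with `i(s₀) = s₀`
    (s₀ : T.H0) (hs₀ : s₀ ≠ 0)
    (hG' : ∀ z ∈ Subgroup.closure ({σ₁', τ₁' * τ₁', τ₂' * τ₂'} : Set T.G),
      T.act z s₀ = s₀)
    (hinvs₀ : T.inv s₀ = s₀)
    -- the level subgroup `G' = ⟨σ'₁, (τ'₁)², (τ'₂)²⟩ ⊆ 𝒢(L)`
    (G' : Subgroup T.G)
    (hG'def : G' = Subgroup.closure ({σ₁', τ₁' * τ₁', τ₂' * τ₂'} : Set T.G))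
    -- the resulting basis `s₀, …, s₇` of `H⁰(L)`
    (s : Fin 8 → T.H0)
    (hbasis : LinearIndependent ℂ s ∧ Submodule.span ℂ (Set.range s) = ⊤)
    (hs0 : s 0 = s₀)
    (hs1 : s 1 = T.act σ₂' s₀)
    (hs2 : s 2 = T.act τ₁' s₀)
    (hs3 : s 3 = T.act τ₂' s₀)
    (hs4 : s 4 = T.act (σ₂' * τ₁') s₀)
    (hs5 : s 5 = T.act (σ₂' * τ₂') s₀)
    (hs6 : s 6 = T.act (τ₁' * τ₂') s₀)
    (hs7 : s 7 = T.act (σ₂' * τ₁' * τ₂') s₀) :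
    -- `|J| = 2⁷`
    Nat.card signChangeGroup = 2 ^ 7 ∧
    -- `G' × ⟨i⟩` is identified with a subgroup of `J`:
    ∃ Φ : (↥G' × Multiplicative (ZMod 2)) →* signChangeGroup,
      Function.Injective Φ ∧
      -- each `g' ∈ G'` acts on the basis `s₀,…,s₇` by a sign vector,
      -- whose class in `J` is `Φ(g', 1)`
      (∀ z : ↥G', ∃ ε : Fin 8 → ℤˣ,
        Φ (z, 1) = QuotientGroup.mk ε ∧
        ∀ k, T.act (z : T.G) (s k) = (((ε k : ℤ) : ℂ)) • s k) ∧
      -- every nontrivial `g ∈ G` is a product of four sign changes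
      -- `α_iα_jα_kα_l` (with `α₀ = α₁⋯α₇`)
      (∀ z : ↥G', (z : T.G) ≠ 1 → ∀ ε : Fin 8 → ℤˣ,
        (∀ k, T.act (z : T.G) (s k) = (((ε k : ℤ) : ℂ)) • s k) →
        (Finset.univ.filter fun k => ε k = -1).card = 4) ∧
      -- the inversion `i` acts as `α₆α₇`:
      -- `i(s₀:⋯:s₇) = (s₀:⋯:s₅:-s₆:-s₇)`
      (∃ ε : Fin 8 → ℤˣ,
        Φ (1, Multiplicative.ofAdd 1) = QuotientGroup.mk ε ∧
        (∀ k, T.inv (s k) = (((ε k : ℤ) : ℂ)) • s k) ∧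
        ∀ k, ε k = -1 ↔ (k = 6 ∨ k = 7)) := by
  classical
  obtain ⟨hli, hspan⟩ := hbasis
  refine ⟨sv_card, ?_⟩
  -- ## Basic facts about the action
  have hA : ∀ (x y : T.G) (v : T.H0), T.act (x*y) v = T.act x (T.act y v) := by
    intro x y v; rw [map_mul]; rfl
  have act_smul : ∀ (g : T.G) (c : ℂ) (v : T.H0), T.act g (c • v) = c • T.act g v :=
    fun g c v => map_smul (T.act g) c v
  have smul_congr : ∀ (c d : ℂ) (v : T.H0), c = d → c • v = d • v := by
    intro c d v h; rw [h]
  have cast1 : ∀ u : ℤˣ, u = 1 → ((u : ℤ) : ℂ) = 1 := by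
    intro u h; rw [h]; norm_num
  have castm1 : ∀ u : ℤˣ, u = -1 → ((u : ℤ) : ℂ) = -1 := by
    intro u h; rw [h]; norm_num
  have hcomm_act : ∀ (x y : T.G) (v : T.H0),
      T.act x (T.act y v) = ((T.weil (T.proj x) (T.proj y) : ℂ)) • T.act y (T.act x v) := by
    intro x y v
    have h := congrArg (fun g => T.act g v) (T.weil_comm x y)
    simp only [hA, T.act_iota] at h
    exact h
  have key : ∀ (x : T.G) (c : ℂ) (y : T.G) (v : T.H0), T.act x v = c • v →
      T.act x (T.act y v) = ((T.weil (T.proj x) (T.proj y) : ℂ) * c) • T.act y v := by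
    intro x c y v hv
    rw [hcomm_act x y v, hv, map_smul, smul_smul]
  have key2 : ∀ (x : T.G) (c : ℂ) (y : T.G) (v : T.H0), T.act x (T.act x v) = c • v →
      T.act x (T.act x (T.act y v)) =
        ((T.weil (T.proj x) (T.proj y) : ℂ) * (T.weil (T.proj x) (T.proj y) : ℂ) * c)
          • T.act y v := by
    intro x c y v hv
    rw [hcomm_act x y v, map_smul, hcomm_act x y (T.act x v), hv, map_smul, smul_smul,
      smul_smul, mul_assoc]
  -- ## sections fixed by the generators of G'
  have hmem1 : σ₁' ∈ Subgroup.closure ({σ₁', τ₁' * τ₁', τ₂' * τ₂'} : Set T.G) :=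
    Subgroup.subset_closure (by simp)
  have hmem2 : τ₁' * τ₁' ∈ Subgroup.closure ({σ₁', τ₁' * τ₁', τ₂' * τ₂'} : Set T.G) :=
    Subgroup.subset_closure (by simp)
  have hmem3 : τ₂' * τ₂' ∈ Subgroup.closure ({σ₁', τ₁' * τ₁', τ₂' * τ₂'} : Set T.G) :=
    Subgroup.subset_closure (by simp)
  have f1 : T.act σ₁' s₀ = s₀ := hG' _ hmem1
  have f2 : T.act (τ₁' * τ₁') s₀ = s₀ := hG' _ hmem2
  have f3 : T.act (τ₂' * τ₂') s₀ = s₀ := hG' _ hmem3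
  have f1' : T.act σ₁' s₀ = (1:ℂ) • s₀ := by rw [one_smul]; exact f1
  have f2' : T.act τ₁' (T.act τ₁' s₀) = (1:ℂ) • s₀ := by rw [one_smul, ← hA]; exact f2
  have f3' : T.act τ₂' (T.act τ₂' s₀) = (1:ℂ) • s₀ := by rw [one_smul, ← hA]; exact f3
  -- ## values of the Weil pairing
  have iota_one_of : ∀ u : ℂˣ, T.iota u = 1 → u = 1 := fun u h =>
    T.iota_injective (h.trans (map_one T.iota).symm)
  have wswap : ∀ x y : T.G,
      T.weil (T.proj x) (T.proj y) * T.weil (T.proj y) (T.proj x) = 1 := by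
    intro x y
    have h1 := T.weil_comm x y
    rw [T.weil_comm y x, ← mul_assoc, ← map_mul] at h1
    exact iota_one_of _ (right_eq_mul.mp h1)
  have wself : ∀ x : T.G, T.weil (T.proj x) (T.proj x) = 1 := by
    intro x
    have h1 := T.weil_comm x x
    exact iota_one_of _ (right_eq_mul.mp h1)
  have W11 : (T.weil (T.proj σ₁') (T.proj σ₂') : ℂ) = -1 := hw₁
  have W12 : (T.weil (T.proj σ₁') (T.proj τ₁') : ℂ) = 1 := by rw [hw₃, Units.val_one]
  have W13 : (T.weil (T.proj σ₁') (T.proj τ₂') : ℂ) = 1 := by rw [hw₄, Units.val_one]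
  have W21 : (T.weil (T.proj τ₁') (T.proj σ₂') : ℂ) = 1 := by
    have h := wswap σ₂' τ₁'; rw [hw₅, one_mul] at h; rw [h, Units.val_one]
  have W22 : (T.weil (T.proj τ₁') (T.proj τ₁') : ℂ) = 1 := by rw [wself, Units.val_one]
  have W23 : (T.weil (T.proj τ₁') (T.proj τ₂') : ℂ) = -Complex.I := hw₂
  have W31 : (T.weil (T.proj τ₂') (T.proj σ₂') : ℂ) = 1 := by
    have h := wswap σ₂' τ₂'; rw [hw₆, one_mul] at h; rw [h, Units.val_one]
  have W32 : (T.weil (T.proj τ₂') (T.proj τ₁') : ℂ) = Complex.I := by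
    have h := congrArg (fun u : ℂˣ => (u : ℂ)) (wswap τ₁' τ₂')
    simp only [Units.val_mul, Units.val_one] at h
    rw [hw₂] at h
    have h2 := inv_eq_of_mul_eq_one_right h
    rw [← h2, inv_neg, Complex.inv_I, neg_neg]
  have W33 : (T.weil (T.proj τ₂') (T.proj τ₂') : ℂ) = 1 := by rw [wself, Units.val_one]
  -- ## the action of σ₁' on the basis
  have Q1 : ∀ k, T.act σ₁' (s k) = ((sv1 k : ℤ) : ℂ) • s k := by
    have h1 := key σ₁' 1 τ₁' s₀ f1'
    have h2 := key σ₁' 1 τ₂' s₀ f1'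
    have h3 := key σ₁' 1 σ₂' s₀ f1'
    have h6 := key σ₁' _ τ₁' _ h2
    have e0 : T.act σ₁' (s 0) = ((sv1 0 : ℤ) : ℂ) • s 0 := by
      rw [hs0, cast1 (sv1 0) (by decide), one_smul]
      exact f1
    have e1 : T.act σ₁' (s 1) = ((sv1 1 : ℤ) : ℂ) • s 1 := by
      rw [hs1, h3, W11]
      exact smul_congr _ _ _ (by rw [castm1 (sv1 1) (by decide)]; ring_nf)
    have e2 : T.act σ₁' (s 2) = ((sv1 2 : ℤ) : ℂ) • s 2 := by
      rw [hs2, h1, W12]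
      exact smul_congr _ _ _ (by rw [cast1 (sv1 2) (by decide)]; ring_nf)
    have e3 : T.act σ₁' (s 3) = ((sv1 3 : ℤ) : ℂ) • s 3 := by
      rw [hs3, h2, W13]
      exact smul_congr _ _ _ (by rw [cast1 (sv1 3) (by decide)]; ring_nf)
    have e4 : T.act σ₁' (s 4) = ((sv1 4 : ℤ) : ℂ) • s 4 := by
      rw [hs4, hA, key σ₁' _ σ₂' _ h1, W11, W12]
      exact smul_congr _ _ _ (by rw [castm1 (sv1 4) (by decide)]; ring_nf)
    have e5 : T.act σ₁' (s 5) = ((sv1 5 : ℤ) : ℂ) • s 5 := by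
      rw [hs5, hA, key σ₁' _ σ₂' _ h2, W11, W13]
      exact smul_congr _ _ _ (by rw [castm1 (sv1 5) (by decide)]; ring_nf)
    have e6 : T.act σ₁' (s 6) = ((sv1 6 : ℤ) : ℂ) • s 6 := by
      rw [hs6, hA, h6, W12, W13]
      exact smul_congr _ _ _ (by rw [cast1 (sv1 6) (by decide)]; ring_nf)
    have e7 : T.act σ₁' (s 7) = ((sv1 7 : ℤ) : ℂ) • s 7 := by
      rw [hs7, hA, hA, key σ₁' _ σ₂' _ h6, W11, W12, W13]
      exact smul_congr _ _ _ (by rw [castm1 (sv1 7) (by decide)]; ring_nf)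
    intro k; fin_cases k
    exacts [e0, e1, e2, e3, e4, e5, e6, e7]
  -- ## the action of τ₁'·τ₁' on the basis
  have Q2 : ∀ k, T.act (τ₁' * τ₁') (s k) = ((sv2 k : ℤ) : ℂ) • s k := by
    have h1 := key2 τ₁' 1 τ₁' s₀ f2'
    have h2 := key2 τ₁' 1 τ₂' s₀ f2'
    have h3 := key2 τ₁' 1 σ₂' s₀ f2'
    have h6 := key2 τ₁' _ τ₁' _ h2
    have e0 : T.act (τ₁' * τ₁') (s 0) = ((sv2 0 : ℤ) : ℂ) • s 0 := by
      rw [hs0, cast1 (sv2 0) (by decide), one_smul]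
      exact f2
    have e1 : T.act (τ₁' * τ₁') (s 1) = ((sv2 1 : ℤ) : ℂ) • s 1 := by
      rw [hs1, hA, h3, W21]
      exact smul_congr _ _ _ (by rw [cast1 (sv2 1) (by decide)]; ring_nf)
    have e2 : T.act (τ₁' * τ₁') (s 2) = ((sv2 2 : ℤ) : ℂ) • s 2 := by
      rw [hs2, hA, h1, W22]
      exact smul_congr _ _ _ (by rw [cast1 (sv2 2) (by decide)]; ring_nf)
    have e3 : T.act (τ₁' * τ₁') (s 3) = ((sv2 3 : ℤ) : ℂ) • s 3 := by
      rw [hs3, hA, h2, W23]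
      exact smul_congr _ _ _ (by rw [castm1 (sv2 3) (by decide)]; ring_nf; all_goals simp [Complex.I_sq])
    have e4 : T.act (τ₁' * τ₁') (s 4) = ((sv2 4 : ℤ) : ℂ) • s 4 := by
      rw [hs4, hA, hA, key2 τ₁' _ σ₂' _ h1, W21, W22]
      exact smul_congr _ _ _ (by rw [cast1 (sv2 4) (by decide)]; ring_nf)
    have e5 : T.act (τ₁' * τ₁') (s 5) = ((sv2 5 : ℤ) : ℂ) • s 5 := by
      rw [hs5, hA, hA, key2 τ₁' _ σ₂' _ h2, W21, W23]
      exact smul_congr _ _ _ (by rw [castm1 (sv2 5) (by decide)]; ring_nf; all_goals simp [Complex.I_sq])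
    have e6 : T.act (τ₁' * τ₁') (s 6) = ((sv2 6 : ℤ) : ℂ) • s 6 := by
      rw [hs6, hA, hA, h6, W22, W23]
      exact smul_congr _ _ _ (by rw [castm1 (sv2 6) (by decide)]; ring_nf; all_goals simp [Complex.I_sq])
    have e7 : T.act (τ₁' * τ₁') (s 7) = ((sv2 7 : ℤ) : ℂ) • s 7 := by
      rw [hs7, hA, hA, hA, key2 τ₁' _ σ₂' _ h6, W21, W22, W23]
      exact smul_congr _ _ _ (by rw [castm1 (sv2 7) (by decide)]; ring_nf; all_goals simp [Complex.I_sq])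
    intro k; fin_cases k
    exacts [e0, e1, e2, e3, e4, e5, e6, e7]
  -- ## the action of τ₂'·τ₂' on the basis
  have Q3 : ∀ k, T.act (τ₂' * τ₂') (s k) = ((sv3 k : ℤ) : ℂ) • s k := by
    have h1 := key2 τ₂' 1 τ₁' s₀ f3'
    have h2 := key2 τ₂' 1 τ₂' s₀ f3'
    have h3 := key2 τ₂' 1 σ₂' s₀ f3'
    have h6 := key2 τ₂' _ τ₁' _ h2
    have e0 : T.act (τ₂' * τ₂') (s 0) = ((sv3 0 : ℤ) : ℂ) • s 0 := by
      rw [hs0, cast1 (sv3 0) (by decide), one_smul]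
      exact f3
    have e1 : T.act (τ₂' * τ₂') (s 1) = ((sv3 1 : ℤ) : ℂ) • s 1 := by
      rw [hs1, hA, h3, W31]
      exact smul_congr _ _ _ (by rw [cast1 (sv3 1) (by decide)]; ring_nf)
    have e2 : T.act (τ₂' * τ₂') (s 2) = ((sv3 2 : ℤ) : ℂ) • s 2 := by
      rw [hs2, hA, h1, W32]
      exact smul_congr _ _ _ (by rw [castm1 (sv3 2) (by decide)]; ring_nf; all_goals simp [Complex.I_sq])
    have e3 : T.act (τ₂' * τ₂') (s 3) = ((sv3 3 : ℤ) : ℂ) • s 3 := by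
      rw [hs3, hA, h2, W33]
      exact smul_congr _ _ _ (by rw [cast1 (sv3 3) (by decide)]; ring_nf)
    have e4 : T.act (τ₂' * τ₂') (s 4) = ((sv3 4 : ℤ) : ℂ) • s 4 := by
      rw [hs4, hA, hA, key2 τ₂' _ σ₂' _ h1, W31, W32]
      exact smul_congr _ _ _ (by rw [castm1 (sv3 4) (by decide)]; ring_nf; all_goals simp [Complex.I_sq])
    have e5 : T.act (τ₂' * τ₂') (s 5) = ((sv3 5 : ℤ) : ℂ) • s 5 := by
      rw [hs5, hA, hA, key2 τ₂' _ σ₂' _ h2, W31, W33]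
      exact smul_congr _ _ _ (by rw [cast1 (sv3 5) (by decide)]; ring_nf)
    have e6 : T.act (τ₂' * τ₂') (s 6) = ((sv3 6 : ℤ) : ℂ) • s 6 := by
      rw [hs6, hA, hA, h6, W32, W33]
      exact smul_congr _ _ _ (by rw [castm1 (sv3 6) (by decide)]; ring_nf; all_goals simp [Complex.I_sq])
    have e7 : T.act (τ₂' * τ₂') (s 7) = ((sv3 7 : ℤ) : ℂ) • s 7 := by
      rw [hs7, hA, hA, hA, key2 τ₂' _ σ₂' _ h6, W31, W32, W33]
      exact smul_congr _ _ _ (by rw [castm1 (sv3 7) (by decide)]; ring_nf; all_goals simp [Complex.I_sq])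
    intro k; fin_cases k
    exacts [e0, e1, e2, e3, e4, e5, e6, e7]
  -- ## uniqueness of sign vectors
  have hsnz : ∀ k, s k ≠ 0 := fun k => hli.ne_zero k
  have scalar_inj : ∀ (c d : ℂ) (v : T.H0), v ≠ 0 → c • v = d • v → c = d := by
    intro c d v hv h
    by_contra hne
    have h0 : (c - d) • v = 0 := by rw [sub_smul, h, sub_self]
    rcases smul_eq_zero.mp h0 with h1 | h1
    · exact hne (sub_eq_zero.mp h1)
    · exact hv h1
  have huniq : ∀ (z : T.G) (ε ε' : Fin 8 → ℤˣ),
      (∀ k, T.act z (s k) = ((ε k : ℤ) : ℂ) • s k) →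
      (∀ k, T.act z (s k) = ((ε' k : ℤ) : ℂ) • s k) → ε = ε' := by
    intro z ε ε' h h'
    funext k
    have hc := scalar_inj _ _ _ (hsnz k) ((h k).symm.trans (h' k))
    exact Units.ext (by exact_mod_cast hc)
  have P1 : ∀ k, T.act (1 : T.G) (s k) = (((1 : Fin 8 → ℤˣ) k : ℤ) : ℂ) • s k := by
    intro k
    rw [map_one]
    show s k = _
    rw [show (((1 : Fin 8 → ℤˣ) k : ℤ) : ℂ) = 1 from by norm_num, one_smul]
  have Pmul : ∀ (z w : T.G) (ε δ : Fin 8 → ℤˣ),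
      (∀ k, T.act z (s k) = ((ε k : ℤ) : ℂ) • s k) →
      (∀ k, T.act w (s k) = ((δ k : ℤ) : ℂ) • s k) →
      ∀ k, T.act (z * w) (s k) = (((ε * δ) k : ℤ) : ℂ) • s k := by
    intro z w ε δ hz hw k
    rw [hA, hw k, map_smul, hz k, smul_smul]
    refine smul_congr _ _ _ ?_
    rw [show ((ε * δ) k : ℤ) = (ε k : ℤ) * (δ k : ℤ) from by rw [Pi.mul_apply, Units.val_mul]]
    push_cast
    ring
  -- ## commutation relations among the generators of G'
  have hcent : ∀ (u : ℂˣ) (x y : T.G), x * (T.iota u * y) = T.iota u * (x * y) := by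
    intro u x y; rw [← mul_assoc, ← T.iota_central, mul_assoc]
  have comm_of_weil_one : ∀ x y : T.G,
      T.weil (T.proj x) (T.proj y) = 1 → x * y = y * x := by
    intro x y h
    have h1 := T.weil_comm x y
    rw [h, map_one, one_mul] at h1
    exact h1
  have hc1 : σ₁' * τ₁' = τ₁' * σ₁' := comm_of_weil_one _ _ hw₃
  have hc2 : σ₁' * τ₂' = τ₂' * σ₁' := comm_of_weil_one _ _ hw₄
  have c12 : σ₁' * (τ₁' * τ₁') = (τ₁' * τ₁') * σ₁' := by
    rw [← mul_assoc, hc1, mul_assoc, hc1, ← mul_assoc]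
  have c13 : σ₁' * (τ₂' * τ₂') = (τ₂' * τ₂') * σ₁' := by
    rw [← mul_assoc, hc2, mul_assoc, hc2, ← mul_assoc]
  have c23 : (τ₁' * τ₁') * (τ₂' * τ₂') = (τ₂' * τ₂') * (τ₁' * τ₁') := by
    have h := T.weil_comm τ₁' τ₂'
    have hstep : ∀ x : T.G, τ₁' * (τ₂' * x) =
        T.iota (T.weil (T.proj τ₁') (T.proj τ₂')) * (τ₂' * (τ₁' * x)) := by
      intro x; rw [← mul_assoc, h, mul_assoc, mul_assoc]
    have hc4 : T.weil (T.proj τ₁') (T.proj τ₂') * T.weil (T.proj τ₁') (T.proj τ₂') *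
        T.weil (T.proj τ₁') (T.proj τ₂') * T.weil (T.proj τ₁') (T.proj τ₂') = 1 := by
      ext
      push_cast
      rw [hw₂]
      ring_nf
      rw [show (4:ℕ) = 2*2 from rfl, pow_mul, Complex.I_sq]
      norm_num
    calc (τ₁' * τ₁') * (τ₂' * τ₂')
        = τ₁' * (τ₁' * (τ₂' * τ₂')) := by rw [mul_assoc]
      _ = τ₁' * (T.iota (T.weil (T.proj τ₁') (T.proj τ₂')) * (τ₂' * (τ₁' * τ₂'))) := by
          rw [hstep τ₂']
      _ = T.iota (T.weil (T.proj τ₁') (T.proj τ₂')) * (τ₁' * (τ₂' * (τ₁' * τ₂'))) := by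
          rw [hcent]
      _ = T.iota (T.weil (T.proj τ₁') (T.proj τ₂')) *
            (T.iota (T.weil (T.proj τ₁') (T.proj τ₂')) * (τ₂' * (τ₁' * (τ₁' * τ₂')))) := by
          rw [hstep (τ₁' * τ₂')]
      _ = T.iota (T.weil (T.proj τ₁') (T.proj τ₂')) *
            (T.iota (T.weil (T.proj τ₁') (T.proj τ₂')) *
              (τ₂' * (τ₁' * (T.iota (T.weil (T.proj τ₁') (T.proj τ₂')) * (τ₂' * τ₁'))))) := by
          rw [h]
      _ = T.iota (T.weil (T.proj τ₁') (T.proj τ₂')) *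
            (T.iota (T.weil (T.proj τ₁') (T.proj τ₂')) *
              (τ₂' * (T.iota (T.weil (T.proj τ₁') (T.proj τ₂')) * (τ₁' * (τ₂' * τ₁'))))) := by
          rw [hcent _ τ₁' (τ₂' * τ₁')]
      _ = T.iota (T.weil (T.proj τ₁') (T.proj τ₂')) *
            (T.iota (T.weil (T.proj τ₁') (T.proj τ₂')) *
              (T.iota (T.weil (T.proj τ₁') (T.proj τ₂')) *
                (τ₂' * (τ₁' * (τ₂' * τ₁'))))) := by
          rw [hcent _ τ₂' (τ₁' * (τ₂' * τ₁'))]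
      _ = T.iota (T.weil (T.proj τ₁') (T.proj τ₂')) *
            (T.iota (T.weil (T.proj τ₁') (T.proj τ₂')) *
              (T.iota (T.weil (T.proj τ₁') (T.proj τ₂')) *
                (τ₂' * (T.iota (T.weil (T.proj τ₁') (T.proj τ₂')) *
                  (τ₂' * (τ₁' * τ₁')))))) := by
          rw [hstep τ₁']
      _ = T.iota (T.weil (T.proj τ₁') (T.proj τ₂')) *
            (T.iota (T.weil (T.proj τ₁') (T.proj τ₂')) *
              (T.iota (T.weil (T.proj τ₁') (T.proj τ₂')) *
                (T.iota (T.weil (T.proj τ₁') (T.proj τ₂')) *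
                  (τ₂' * (τ₂' * (τ₁' * τ₁')))))) := by
          rw [hcent _ τ₂' (τ₂' * (τ₁' * τ₁'))]
      _ = (τ₂' * τ₂') * (τ₁' * τ₁') := by
          rw [← mul_assoc, ← mul_assoc, ← mul_assoc, ← map_mul, ← map_mul, ← map_mul, hc4,
            map_one, one_mul, ← mul_assoc]
  -- squares of the generators are 1
  have sq2 : (τ₁' * τ₁') * (τ₁' * τ₁') = 1 := by
    rw [show (τ₁' * τ₁') * (τ₁' * τ₁') = τ₁' ^ 4 from by simp [pow_succ, mul_assoc], hτ₁]
  have sq3 : (τ₂' * τ₂') * (τ₂' * τ₂') = 1 := by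
    rw [show (τ₂' * τ₂') * (τ₂' * τ₂') = τ₂' ^ 4 from by simp [pow_succ, mul_assoc], hτ₂]
  -- ## normal form for elements of G'
  have l21 : (τ₁' * τ₁') * σ₁' = σ₁' * (τ₁' * τ₁') := c12.symm
  have l31 : (τ₂' * τ₂') * σ₁' = σ₁' * (τ₂' * τ₂') := c13.symm
  have l32 : (τ₂' * τ₂') * (τ₁' * τ₁') = (τ₁' * τ₁') * (τ₂' * τ₂') := c23.symm
  have l21' : ∀ x, (τ₁' * τ₁') * (σ₁' * x) = σ₁' * ((τ₁' * τ₁') * x) := by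
    intro x; rw [← mul_assoc, l21, mul_assoc]
  have l31' : ∀ x, (τ₂' * τ₂') * (σ₁' * x) = σ₁' * ((τ₂' * τ₂') * x) := by
    intro x; rw [← mul_assoc, l31, mul_assoc]
  have l32' : ∀ x, (τ₂' * τ₂') * ((τ₁' * τ₁') * x) = (τ₁' * τ₁') * ((τ₂' * τ₂') * x) := by
    intro x; rw [← mul_assoc, l32, mul_assoc]
  have s1' : ∀ x, σ₁' * (σ₁' * x) = x := by intro x; rw [← mul_assoc, hσ₁, one_mul]
  have s2' : ∀ x, (τ₁' * τ₁') * ((τ₁' * τ₁') * x) = x := by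
    intro x; rw [← mul_assoc, sq2, one_mul]
  have s3' : ∀ x, (τ₂' * τ₂') * ((τ₂' * τ₂') * x) = x := by
    intro x; rw [← mul_assoc, sq3, one_mul]
  have m21 : ∀ x, τ₁' * (τ₁' * (σ₁' * x)) = σ₁' * (τ₁' * (τ₁' * x)) := by
    intro x; simpa [mul_assoc] using l21' x
  have m31 : ∀ x, τ₂' * (τ₂' * (σ₁' * x)) = σ₁' * (τ₂' * (τ₂' * x)) := by
    intro x; simpa [mul_assoc] using l31' x
  have m32 : ∀ x, τ₂' * (τ₂' * (τ₁' * (τ₁' * x))) = τ₁' * (τ₁' * (τ₂' * (τ₂' * x))) := by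
    intro x; simpa [mul_assoc] using l32' x
  have t21 : τ₁' * (τ₁' * σ₁') = σ₁' * (τ₁' * τ₁') := by simpa [mul_assoc] using l21
  have t31 : τ₂' * (τ₂' * σ₁') = σ₁' * (τ₂' * τ₂') := by simpa [mul_assoc] using l31
  have t32 : τ₂' * (τ₂' * (τ₁' * τ₁')) = τ₁' * (τ₁' * (τ₂' * τ₂')) := by
    simpa [mul_assoc] using l32
  have u2 : τ₁' * (τ₁' * (τ₁' * τ₁')) = 1 := by simpa [mul_assoc] using sq2
  have u3 : τ₂' * (τ₂' * (τ₂' * τ₂')) = 1 := by simpa [mul_assoc] using sq3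
  have n2 : ∀ x, τ₁' * (τ₁' * (τ₁' * (τ₁' * x))) = x := by
    intro x; simpa [mul_assoc] using s2' x
  have n3 : ∀ x, τ₂' * (τ₂' * (τ₂' * (τ₂' * x))) = x := by
    intro x; simpa [mul_assoc] using s3' x
  have hrepmul : ∀ a b c a' b' c' : Bool,
      ((cond a σ₁' 1) * (cond b (τ₁' * τ₁') 1) * (cond c (τ₂' * τ₂') 1)) *
        ((cond a' σ₁' 1) * (cond b' (τ₁' * τ₁') 1) * (cond c' (τ₂' * τ₂') 1)) =
      (cond (xor a a') σ₁' 1) * (cond (xor b b') (τ₁' * τ₁') 1) *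
        (cond (xor c c') (τ₂' * τ₂') 1) := by
    intro a b c a' b' c'
    cases a <;> cases b <;> cases c <;> cases a' <;> cases b' <;> cases c' <;>
      simp only [Bool.cond_true, Bool.cond_false, Bool.xor_false, Bool.xor_true,
        Bool.false_xor, Bool.true_xor, Bool.not_true, Bool.not_false, one_mul, mul_one,
        mul_assoc, hσ₁, s1', m21, m31, m32, t21, t31, t32, u2, u3, n2, n3]
  have hrep : ∀ z ∈ Subgroup.closure ({σ₁', τ₁' * τ₁', τ₂' * τ₂'} : Set T.G),
      ∃ a b c : Bool, z =
        (cond a σ₁' 1) * (cond b (τ₁' * τ₁') 1) * (cond c (τ₂' * τ₂') 1) := by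
    intro z hz
    induction hz using Subgroup.closure_induction with
    | mem x hx =>
      simp only [Set.mem_insert_iff, Set.mem_singleton_iff] at hx
      rcases hx with rfl | rfl | rfl
      · exact ⟨true, false, false, by simp⟩
      · exact ⟨false, true, false, by simp⟩
      · exact ⟨false, false, true, by simp⟩
    | one => exact ⟨false, false, false, by simp⟩
    | mul x y _ _ hx hy =>
      obtain ⟨a, b, c, rfl⟩ := hx
      obtain ⟨a', b', c', rfl⟩ := hy
      exact ⟨xor a a', xor b b', xor c c', hrepmul a b c a' b' c'⟩
    | inv x _ hx =>
      obtain ⟨a, b, c, rfl⟩ := hx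
      refine ⟨a, b, c, ?_⟩
      refine inv_eq_of_mul_eq_one_right ?_
      rw [hrepmul a b c a b c]
      simp
  -- the action of normal forms
  have Qrep : ∀ a b c : Bool, ∀ k,
      T.act ((cond a σ₁' 1) * (cond b (τ₁' * τ₁') 1) * (cond c (τ₂' * τ₂') 1)) (s k) =
        ((svp a b c k : ℤ) : ℂ) • s k := by
    intro a b c
    have h1 : ∀ k, T.act (cond a σ₁' 1) (s k) = ((cond a sv1 1 k : ℤ) : ℂ) • s k := by
      cases a
      · exact P1
      · exact Q1
    have h2 : ∀ k, T.act (cond b (τ₁' * τ₁') 1) (s k) =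
        ((cond b sv2 1 k : ℤ) : ℂ) • s k := by
      cases b
      · exact P1
      · exact Q2
    have h3 : ∀ k, T.act (cond c (τ₂' * τ₂') 1) (s k) =
        ((cond c sv3 1 k : ℤ) : ℂ) • s k := by
      cases c
      · exact P1
      · exact Q3
    exact Pmul _ _ _ _ (Pmul _ _ _ _ h1 h2) h3
  -- existence of sign vectors for every element of G'
  have hex : ∀ z : ↥G', ∃ ε : Fin 8 → ℤˣ,
      ∀ k, T.act (z : T.G) (s k) = ((ε k : ℤ) : ℂ) • s k := by
    intro z
    have hzmem : (z : T.G) ∈ Subgroup.closure ({σ₁', τ₁' * τ₁', τ₂' * τ₂'} : Set T.G) := by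
      rw [← hG'def]; exact z.2
    obtain ⟨a, b, c, hz⟩ := hrep _ hzmem
    exact ⟨svp a b c, by rw [hz]; exact Qrep a b c⟩
  have εfP : ∀ z : ↥G', ∀ k,
      T.act (z : T.G) (s k) = (((Classical.choose (hex z)) k : ℤ) : ℂ) • s k :=
    fun z => Classical.choose_spec (hex z)
  have εf1 : Classical.choose (hex 1) = 1 := huniq 1 _ _ (εfP 1) P1
  have εfmul : ∀ z w : ↥G', Classical.choose (hex (z * w)) =
      Classical.choose (hex z) * Classical.choose (hex w) :=
    fun z w => huniq _ _ _ (εfP (z * w)) (Pmul _ _ _ _ (εfP z) (εfP w))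
  have εfrep : ∀ (z : ↥G') (a b c : Bool),
      (z : T.G) = (cond a σ₁' 1) * (cond b (τ₁' * τ₁') 1) * (cond c (τ₂' * τ₂') 1) →
      Classical.choose (hex z) = svp a b c := by
    intro z a b c hz
    exact huniq _ _ _ (εfP z) (by rw [hz]; exact Qrep a b c)
  -- ## the inversion
  have hInv : ∀ (z : T.G) (v : T.H0), T.inv (T.act z v) = T.act (T.deltaNeg z) (T.inv v) := by
    intro z v
    have h := T.inv_act z (T.inv v)
    rw [T.inv_invol v] at h
    exact h
  have hIs : ∀ z : T.G, T.inv (T.act z s₀) = T.act (T.deltaNeg z) s₀ := by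
    intro z; rw [hInv, hinvs₀]
  have hτ₁inv : τ₁'⁻¹ = τ₁' * (τ₁' * τ₁') := by
    refine inv_eq_of_mul_eq_one_right ?_
    rw [show τ₁' * (τ₁' * (τ₁' * τ₁')) = τ₁' ^ 4 from by simp [pow_succ, mul_assoc], hτ₁]
  have hτ₂inv : τ₂'⁻¹ = τ₂' * (τ₂' * τ₂') := by
    refine inv_eq_of_mul_eq_one_right ?_
    rw [show τ₂' * (τ₂' * (τ₂' * τ₂')) = τ₂' ^ 4 from by simp [pow_succ, mul_assoc], hτ₂]
  have hτ₁inva : T.act τ₁'⁻¹ s₀ = T.act τ₁' s₀ := by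
    rw [hτ₁inv, hA, f2]
  have hτ₂inva : T.act τ₂'⁻¹ s₀ = T.act τ₂' s₀ := by
    rw [hτ₂inv, hA, f3]
  have hτkey : T.act τ₁' (T.act τ₁' (T.act τ₂' s₀)) =
      ((T.weil (T.proj τ₁') (T.proj τ₂') : ℂ) * (T.weil (T.proj τ₁') (T.proj τ₂') : ℂ) * 1)
        • T.act τ₂' s₀ := key2 τ₁' 1 τ₂' s₀ f2'
  have hinvcore : T.act τ₁'⁻¹ (T.act τ₂'⁻¹ s₀) = (-1 : ℂ) • T.act τ₁' (T.act τ₂' s₀) := by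
    rw [hτ₂inva, hτ₁inv, hA, hA, hτkey, act_smul, W23]
    exact smul_congr _ _ _ (by ring_nf; all_goals simp [Complex.I_sq])
  have Ri : ∀ k, T.inv (s k) = ((svi k : ℤ) : ℂ) • s k := by
    have e0 : T.inv (s 0) = ((svi 0 : ℤ) : ℂ) • s 0 := by
      rw [hs0, cast1 (svi 0) (by decide), one_smul]
      exact hinvs₀
    have e1 : T.inv (s 1) = ((svi 1 : ℤ) : ℂ) • s 1 := by
      rw [hs1, hIs, hδσ₂, cast1 (svi 1) (by decide), one_smul]
    have e2 : T.inv (s 2) = ((svi 2 : ℤ) : ℂ) • s 2 := by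
      rw [hs2, hIs, hδτ₁, hτ₁inva, cast1 (svi 2) (by decide), one_smul]
    have e3 : T.inv (s 3) = ((svi 3 : ℤ) : ℂ) • s 3 := by
      rw [hs3, hIs, hδτ₂, hτ₂inva, cast1 (svi 3) (by decide), one_smul]
    have e4 : T.inv (s 4) = ((svi 4 : ℤ) : ℂ) • s 4 := by
      rw [hs4, hIs, T.deltaNeg_mul, hδσ₂, hδτ₁, hA, hτ₁inva, ← hA,
        cast1 (svi 4) (by decide), one_smul]
    have e5 : T.inv (s 5) = ((svi 5 : ℤ) : ℂ) • s 5 := by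
      rw [hs5, hIs, T.deltaNeg_mul, hδσ₂, hδτ₂, hA, hτ₂inva, ← hA,
        cast1 (svi 5) (by decide), one_smul]
    have e6 : T.inv (s 6) = ((svi 6 : ℤ) : ℂ) • s 6 := by
      rw [hs6, hIs, T.deltaNeg_mul, hδτ₁, hδτ₂, hA, hinvcore, ← hA]
      exact smul_congr _ _ _ (by rw [castm1 (svi 6) (by decide)])
    have e7 : T.inv (s 7) = ((svi 7 : ℤ) : ℂ) • s 7 := by
      rw [hs7, hIs, T.deltaNeg_mul, T.deltaNeg_mul, hδσ₂, hδτ₁, hδτ₂, hA, hA, hinvcore,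
        act_smul, ← hA, ← hA]
      exact smul_congr _ _ _ (by rw [castm1 (svi 7) (by decide)])
    intro k; fin_cases k
    exacts [e0, e1, e2, e3, e4, e5, e6, e7]
  -- ## the homomorphism Φ
  refine ⟨{ toFun := fun p => QuotientGroup.mk
              (Classical.choose (hex p.1) * svi ^ (Multiplicative.toAdd p.2).val),
            map_one' := ?_, map_mul' := ?_ }, ?_, ?_, ?_, ?_⟩
  · show (QuotientGroup.mk (Classical.choose (hex (1 : ↥G')) *
        svi ^ (Multiplicative.toAdd (1 : Multiplicative (ZMod 2))).val) : signChangeGroup) = 1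
    rw [show (Multiplicative.toAdd (1 : Multiplicative (ZMod 2))).val = 0 from rfl,
      pow_zero, mul_one, εf1]
    rfl
  · rintro ⟨z, t⟩ ⟨w, u⟩
    show (QuotientGroup.mk (Classical.choose (hex (z * w)) *
        svi ^ (Multiplicative.toAdd (t * u)).val) : signChangeGroup) =
      QuotientGroup.mk (Classical.choose (hex z) * svi ^ (Multiplicative.toAdd t).val) *
        QuotientGroup.mk (Classical.choose (hex w) * svi ^ (Multiplicative.toAdd u).val)
    show (QuotientGroup.mk (Classical.choose (hex (z * w)) *
        svi ^ (Multiplicative.toAdd (t * u)).val) : signChangeGroup) =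
        QuotientGroup.mk ((Classical.choose (hex z) * svi ^ (Multiplicative.toAdd t).val) *
          (Classical.choose (hex w) * svi ^ (Multiplicative.toAdd u).val))
    congr 1
    rw [εfmul, show Multiplicative.toAdd (t * u) =
      Multiplicative.toAdd t + Multiplicative.toAdd u from rfl, sv_heiadd]
    exact mul_mul_mul_comm _ _ _ _
  -- injectivity
  · rintro ⟨z, t⟩ ⟨w, u⟩ hpq
    have hzm : (z : T.G) ∈ Subgroup.closure ({σ₁', τ₁' * τ₁', τ₂' * τ₂'} : Set T.G) := by
      rw [← hG'def]; exact z.2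
    have hwm : (w : T.G) ∈ Subgroup.closure ({σ₁', τ₁' * τ₁', τ₂' * τ₂'} : Set T.G) := by
      rw [← hG'def]; exact w.2
    obtain ⟨a, b, c, hp⟩ := hrep _ hzm
    obtain ⟨a', b', c', hq⟩ := hrep _ hwm
    have hεp := εfrep z a b c hp
    have hεq := εfrep w a' b' c' hq
    have hval : ∀ t : Multiplicative (ZMod 2), ∃ tb : Bool,
        svi ^ (Multiplicative.toAdd t).val = cond tb svi 1 ∧
          Multiplicative.toAdd t = (cond tb 1 0 : ZMod 2) := by
      intro r
      rcases sv_zmod_cases (Multiplicative.toAdd r) with ht | ht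
      · exact ⟨false, by rw [ht, show (0 : ZMod 2).val = 0 from rfl, pow_zero]; rfl,
          by rw [ht]; rfl⟩
      · exact ⟨true, by rw [ht, show (1 : ZMod 2).val = 1 from rfl, pow_one]; rfl,
          by rw [ht]; rfl⟩
    obtain ⟨tb, htb1, htb2⟩ := hval t
    obtain ⟨ub, hub1, hub2⟩ := hval u
    have hpq' : (QuotientGroup.mk (svp a b c * cond tb svi 1) : signChangeGroup) =
        QuotientGroup.mk (svp a' b' c' * cond ub svi 1) := by
      rw [← htb1, ← hub1, ← hεp, ← hεq]
      exact hpq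
    have hYX := sv_mk_eq _ _ hpq'
    have hconc : a' = a ∧ b' = b ∧ c' = c ∧ ub = tb := by
      rcases hYX with h | h
      · have h' : svp a' b' c' * cond ub svi 1 =
            (svp a b c * cond tb svi 1) * cond false svnu 1 := by rw [h]; simp
        have := sv_key_inj a b c a' b' c' tb ub false h'
        exact ⟨this.1, this.2.1, this.2.2.1, this.2.2.2.1⟩
      · have h' : svp a' b' c' * cond ub svi 1 =
            (svp a b c * cond tb svi 1) * cond true svnu 1 := by rw [h]; simp
        have := sv_key_inj a b c a' b' c' tb ub true h'
        exact absurd this.2.2.2.2 (by simp)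
    obtain ⟨ha, hb, hc, htu⟩ := hconc
    have h1 : z = w := by
      apply Subtype.ext
      rw [hp, hq, ha, hb, hc]
    have h2 : t = u := by
      apply Multiplicative.toAdd.injective
      rw [htb2, hub2, htu]
    rw [h1, h2]
  -- the sign vector of each element of G'
  · intro z
    refine ⟨Classical.choose (hex z), ?_, εfP z⟩
    show (QuotientGroup.mk (Classical.choose (hex z) *
        svi ^ (Multiplicative.toAdd (1 : Multiplicative (ZMod 2))).val) : signChangeGroup) = _
    rw [show (Multiplicative.toAdd (1 : Multiplicative (ZMod 2))).val = 0 from rfl,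
      pow_zero, mul_one]
  -- every nontrivial element of G' acts by exactly four sign changes
  · intro z hz ε hε
    have hzm : (z : T.G) ∈ Subgroup.closure ({σ₁', τ₁' * τ₁', τ₂' * τ₂'} : Set T.G) := by
      rw [← hG'def]; exact z.2
    obtain ⟨a, b, c, hzrep⟩ := hrep _ hzm
    have hεz : ε = svp a b c :=
      huniq _ _ _ hε (by rw [hzrep]; exact Qrep a b c)
    rw [hεz]
    apply sv_card4
    rintro ⟨rfl, rfl, rfl⟩
    apply hz
    rw [hzrep]
    simp
  -- the action of the inversion i
  · refine ⟨svi, ?_, Ri, svi_spec⟩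
    show (QuotientGroup.mk (Classical.choose (hex (1 : ↥G')) *
        svi ^ (Multiplicative.toAdd (Multiplicative.ofAdd (1 : ZMod 2))).val)
          : signChangeGroup) = QuotientGroup.mk svi
    rw [show (Multiplicative.toAdd (Multiplicative.ofAdd (1 : ZMod 2))).val = 1 from rfl,
      pow_one, εf1, one_mul]
end
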